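/- Let p be an odd prime and let j be a nonnegative integer. If j = kp+r with integers 0 ≤ k < p and 0 ≤ r < p, then St^{(1,j)}(Q_{2,1}) = (k+1)·Q_{2,0}^{r+1}·Σ_{i=0}^{k} (−1)^i·C(k,i)·C(r+i,i)·Q_{2,0}^{(k−i)p}·Q_{2,1}^{i(p+1)}; otherwise (i.e. if j ≥ p²) St^{(1,j)}(Q_{2,1}) = 0. (Binomial coefficients and the factor (k+1) are reduced mod p.) -/

import Mathlib

open MvPolynomial Finset

/-- The total Steenrod-Milnor operation `φ : R → R[t₁,t₂]`,
sending `y_k ↦ y_k + y_k^p t₁ + y_k^{p²} t₂`. Here `R = F_p[y₁,y₂]`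
and `R[t₁,t₂]` is modelled as `MvPolynomial (Fin 2) R`. -/
noncomputable def phi (p : ℕ) :
    MvPolynomial (Fin 2) (ZMod p) →ₐ[ZMod p]
      MvPolynomial (Fin 2) (MvPolynomial (Fin 2) (ZMod p)) :=
  aeval (fun k => C (X k) + C (X k ^ p) * X 0 + C (X k ^ (p ^ 2)) * X 1)

/-- The Steenrod-Milnor operation `St^{(i,j)}` : the coefficient of
`t₁^i t₂^j` in `φ f`. -/
noncomputable def St (p i j : ℕ) (f : MvPolynomial (Fin 2) (ZMod p)) :
    MvPolynomial (Fin 2) (ZMod p) :=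
  coeff (Finsupp.single (0 : Fin 2) i + Finsupp.single (1 : Fin 2) j) (phi p f)

/-- `L₂ = y₁ y₂^p - y₁^p y₂`. -/
noncomputable def L2 (p : ℕ) : MvPolynomial (Fin 2) (ZMod p) :=
  X 0 * X 1 ^ p - X 0 ^ p * X 1

/-- `L_{2,0} = y₁^p y₂^{p²} - y₁^{p²} y₂^p`. -/
noncomputable def L20 (p : ℕ) : MvPolynomial (Fin 2) (ZMod p) :=
  X 0 ^ p * X 1 ^ (p ^ 2) - X 0 ^ (p ^ 2) * X 1 ^ p

/-- `L_{2,1} = y₁ y₂^{p²} - y₁^{p²} y₂`. -/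
noncomputable def L21 (p : ℕ) : MvPolynomial (Fin 2) (ZMod p) :=
  X 0 * X 1 ^ (p ^ 2) - X 0 ^ (p ^ 2) * X 1

/-! `y₁` and `y₂` are the roots of the Dickson polynomial `Y^{p²} - Q₁ Y^p + Q₀ Y`, and
`Q₀ = L₂^{p-1}`. Apply `φ` to `y^{p²} = Q₁ y^p - Q₀ y` and keep only the part linear in `t₁`
(with `t₂` as a variable): Frobenius powers contribute nothing there, so the `t₁`-coefficient
`G` of `φ(Q₁)` satisfies, for `y = y₁, y₂`, a linear relation whose other unknown is the
`t₁`-coefficient of `φ(Q₀)`. Eliminating it, and using `φ₀(L₂) = L₂ D` for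
`D = (1 - Q₀ t₂)^{p+1} + Q₁^{p+1} t₂^p` (where `φ₀` is `φ` at `t₁ = 0`), gives
`G = Q₀ (1 - Q₀ t₂) D^{p-2}`. Expanding binomially, the coefficient of `t₂^{kp+r}` is a sum of
binomial coefficients which Lucas' theorem and `C(p-1-a, b) ≡ (-1)^b C(a+b, b)` bring into the
stated form; for `j ≥ p²` all of them vanish for degree reasons. -/

lemma Polynomial.coeff_one_pow_char {S : Type*} [CommRing S] {p : ℕ} [Fact p.Prime] [CharP S p]
    (f : Polynomial S) : (f ^ p).coeff 1 = 0 := by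
  rw [← map_frobenius_expand, coeff_map, coeff_expand (Fact.out : p.Prime).pos,
    if_neg (Fact.out : p.Prime).not_dvd_one, map_zero]

lemma Polynomial.coeff_one_of_frobenius_relation {S : Type*} [CommRing S] {p : ℕ} [Fact p.Prime]
    [CharP S p] {a f g : Polynomial S} (h : a ^ p ^ 2 = f * a ^ p - g * a) :
    f.coeff 1 * a.coeff 0 ^ p = g.coeff 0 * a.coeff 1 + g.coeff 1 * a.coeff 0 := by
  have h1 := congrArg (Polynomial.coeff · 1) h
  have hpow : (a ^ p).coeff 0 = a.coeff 0 ^ p := by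
    rw [← Polynomial.constantCoeff_apply, map_pow, Polynomial.constantCoeff_apply]
  simp only [sq, pow_mul, coeff_one_pow_char, Polynomial.coeff_sub, Polynomial.mul_coeff_one,
    hpow] at h1
  linear_combination -h1

lemma MvPolynomial.coeff_one_sub_C_mul_X_pow {S : Type*} [CommRing S] (a : S) (N m : ℕ) :
    coeff (Finsupp.single 0 m) ((1 - C a * X 0) ^ N : MvPolynomial (Fin 1) S) =
      (-a) ^ m * N.choose m := by
  have hterm (x : ℕ) : (C (-a) * X 0) ^ x * 1 ^ (N - x) * (N.choose x : MvPolynomial (Fin 1) S) =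
      monomial (Finsupp.single 0 x) ((-a) ^ x * N.choose x) := by
    rw [one_pow, mul_one, mul_pow, ← map_pow, X_pow_eq_monomial, C_mul_monomial, mul_one,
      ← map_natCast (C : S →+* _), mul_comm, C_mul_monomial, mul_comm]
  rw [show (1 : MvPolynomial (Fin 1) S) - C a * X 0 = C (-a) * X 0 + 1 by simp; ring, add_pow,
    sum_congr rfl fun x _ => hterm x, coeff_sum]
  simp only [coeff_monomial, (Finsupp.single_injective (0 : Fin 1)).eq_iff, sum_ite_eq', mem_range]
  split_ifs with h
  · rfl
  · rw [Nat.choose_eq_zero_of_lt (by omega), Nat.cast_zero, mul_zero]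

lemma MvPolynomial.coeff_C_mul_X_pow_mul_one_sub_C_mul_X_pow {S : Type*} [CommRing S] (c a : S)
    (n N j : ℕ) :
    coeff (Finsupp.single 0 j) (C c * X 0 ^ n * (1 - C a * X 0) ^ N : MvPolynomial (Fin 1) S) =
      if n ≤ j then c * (-a) ^ (j - n) * N.choose (j - n) else 0 := by
  rw [X_pow_eq_monomial, C_mul_monomial, mul_one, mul_comm, coeff_mul_monomial']
  simp only [Finsupp.single_le_single, ← Finsupp.single_tsub, coeff_one_sub_C_mul_X_pow]
  split_ifs
  · ring
  · rfl

lemma ZMod.choose_sub_one_sub {p : ℕ} [Fact p.Prime] {a b : ℕ} (ha : a < p) (hb : b < p) :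
    ((p - 1 - a).choose b : ZMod p) = (-1) ^ b * (a + b).choose b := by
  have hunit : IsUnit (b.factorial : ZMod p) := by
    rw [isUnit_iff_ne_zero, Ne, ZMod.natCast_eq_zero_iff, Nat.Prime.dvd_factorial Fact.out]
    omega
  have hcast : ((p - 1 - a : ℕ) : ZMod p) = -((a + 1 : ℕ) : ZMod p) := by
    rw [show p - 1 - a = p - (a + 1) by omega, Nat.cast_sub (by omega), ZMod.natCast_self, zero_sub]
  have hneg := ascPochhammer_eval_neg_eq_descPochhammer (ZMod p) (-((a + 1 : ℕ) : ZMod p)) b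
  rw [neg_neg] at hneg
  refine hunit.mul_left_cancel ?_
  calc (b.factorial : ZMod p) * (p - 1 - a).choose b
      = (descPochhammer (ZMod p) b).eval ((p - 1 - a : ℕ) : ZMod p) := by
        rw [descPochhammer_eval_eq_descFactorial, Nat.descFactorial_eq_factorial_mul_choose,
          Nat.cast_mul]
    _ = (-1) ^ b * (ascPochhammer (ZMod p) b).eval ((a + 1 : ℕ) : ZMod p) := by
        rw [hcast, hneg, ← mul_assoc, ← mul_pow, neg_one_mul, neg_neg, one_pow, one_mul]
    _ = b.factorial * ((-1) ^ b * (a + b).choose b) := by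
        rw [← ascPochhammer_eval_cast, ascPochhammer_nat_eq_ascFactorial,
          Nat.ascFactorial_eq_factorial_mul_choose]
        push_cast
        ring

lemma ZMod.choose_add_mul_choose {p : ℕ} [Fact p.Prime] {a b c d : ℕ} (ha : a < p) (hc : c < p) :
    ((a + p * b).choose (c + p * d) : ZMod p) = a.choose c * b.choose d := by
  have hp := (Fact.out : p.Prime).pos
  rw [← Nat.cast_mul, ZMod.natCast_eq_natCast_iff]
  refine Choose.choose_modEq_choose_mod_mul_choose_div_nat.trans ?_
  rw [Nat.add_mul_mod_self_left, Nat.add_mul_mod_self_left, Nat.mod_eq_of_lt ha,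
    Nat.mod_eq_of_lt hc, Nat.add_mul_div_left _ _ hp, Nat.add_mul_div_left _ _ hp,
    Nat.div_eq_of_lt ha, Nat.div_eq_of_lt hc, zero_add, zero_add]

abbrev Rp (p : ℕ) := MvPolynomial (Fin 2) (ZMod p)

abbrev Ap (p : ℕ) := MvPolynomial (Fin 1) (Rp p)

section Dickson

variable {p : ℕ} [Fact p.Prime] {Q0 Q1 : Rp p}

lemma L2_ne_zero : L2 p ≠ 0 := by
  rw [L2, sub_ne_zero, X_pow_eq_monomial, X_pow_eq_monomial, X, X, monomial_mul, monomial_mul,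
    mul_one, Ne, monomial_left_inj one_ne_zero]
  intro h
  have := DFunLike.congr_fun h 0
  simp only [Finsupp.add_apply, Finsupp.single_eq_same, Finsupp.single_eq_of_ne, ne_eq,
    zero_ne_one, not_false_eq_true, add_zero] at this
  exact (Fact.out : p.Prime).one_lt.ne this

lemma L20_eq_L2_pow : L20 p = L2 p ^ p := by
  simp only [L20, L2, sub_pow_char, mul_pow, ← pow_mul, sq]

lemma Q0_eq_L2_pow (hQ0 : Q0 * L2 p = L20 p) : Q0 = L2 p ^ (p - 1) := by
  refine mul_right_cancel₀ L2_ne_zero ?_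
  rw [hQ0, L20_eq_L2_pow, ← pow_succ, Nat.sub_add_cancel (Fact.out : p.Prime).one_le]

lemma X_pow_p_sq (hQ0 : Q0 * L2 p = L20 p) (hQ1 : Q1 * L2 p = L21 p) (k : Fin 2) :
    (X k : Rp p) ^ p ^ 2 = Q1 * X k ^ p - Q0 * X k := by
  have h : (X k : Rp p) ^ p ^ 2 * L2 p - X k ^ p * L21 p + X k * L20 p = 0 := by
    fin_cases k <;> simp only [Fin.zero_eta, Fin.mk_one, L2, L20, L21] <;> ring
  refine mul_right_cancel₀ L2_ne_zero ?_
  linear_combination h + X k * hQ0 - X k ^ p * hQ1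

lemma X_pow_p_cube (hQ0 : Q0 * L2 p = L20 p) (hQ1 : Q1 * L2 p = L21 p) (k : Fin 2) :
    (X k : Rp p) ^ p ^ 3 = (Q1 ^ (p + 1) - Q0 ^ p) * X k ^ p - Q1 ^ p * Q0 * X k := by
  have h := X_pow_p_sq hQ0 hQ1 k
  calc (X k : Rp p) ^ p ^ 3 = (X k ^ p ^ 2) ^ p := by ring
    _ = (Q1 * X k ^ p - Q0 * X k) ^ p := by rw [h]
    _ = Q1 ^ p * X k ^ p ^ 2 - Q0 ^ p * X k ^ p := by
      rw [sub_pow_char, mul_pow, mul_pow, ← pow_mul, ← sq]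
    _ = _ := by rw [h]; ring

end Dickson

/-- `φ f` as a polynomial in `t₁` over `Ap p = R[t₂]`; there `X 0 : Ap p` is `t₂`. -/
noncomputable def phiPoly (p : ℕ) : Rp p →+* Polynomial (Ap p) :=
  (finSuccEquiv (Rp p) 1).toRingHom.comp (phi p).toRingHom

noncomputable def phi0 (p : ℕ) : Rp p →+* Ap p :=
  Polynomial.constantCoeff.comp (phiPoly p)

lemma phiPoly_apply (p : ℕ) (f : Rp p) : phiPoly p f = finSuccEquiv (Rp p) 1 (phi p f) := rfl

lemma St_eq_coeff_phiPoly (p i j : ℕ) (f : Rp p) :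
    St p i j f = coeff (Finsupp.single 0 j) ((phiPoly p f).coeff i) := by
  have : Finsupp.cons i (Finsupp.single (0 : Fin 1) j) =
      Finsupp.single (0 : Fin 2) i + Finsupp.single 1 j := by
    ext a
    refine Fin.cases ?_ (fun b => ?_) a
    · simp
    · rw [Fin.fin_one_eq_zero b, Finsupp.cons_succ]
      simp
  rw [phiPoly_apply, finSuccEquiv_coeff_coeff, this, St]

lemma phiPoly_X (p : ℕ) (k : Fin 2) :
    phiPoly p (X k) = Polynomial.C (C (X k) + C (X k ^ p ^ 2) * X 0) +
      Polynomial.C (C (X k ^ p)) * Polynomial.X := by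
  have hC (r : Rp p) : finSuccEquiv (Rp p) 1 (C r) = Polynomial.C (C r) := by
    simp [finSuccEquiv_apply]
  have hX1 : finSuccEquiv (Rp p) 1 (X 1) = Polynomial.C (X 0) := by
    rw [show (1 : Fin 2) = Fin.succ 0 from rfl, finSuccEquiv_X_succ]
  rw [phiPoly_apply, phi, aeval_X, map_add, map_add, map_mul, map_mul, hC, hC, hC,
    finSuccEquiv_X_zero, hX1]
  simp only [map_add, map_mul]
  ring

lemma coeff_one_phiPoly_X (p : ℕ) (k : Fin 2) : (phiPoly p (X k)).coeff 1 = C (X k ^ p) := by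
  rw [phiPoly_X, Polynomial.coeff_add, Polynomial.coeff_C_mul_X, Polynomial.coeff_C]
  simp

lemma phi0_X (p : ℕ) (k : Fin 2) : phi0 p (X k) = C (X k) + C (X k ^ p ^ 2) * X 0 := by
  simp only [phi0, RingHom.comp_apply, phiPoly_X, Polynomial.constantCoeff_apply,
    Polynomial.coeff_add, Polynomial.coeff_C_zero, Polynomial.mul_coeff_zero,
    Polynomial.coeff_X_zero, mul_zero, add_zero]

noncomputable def L2Ratio (p : ℕ) (Q0 Q1 : Rp p) : Ap p :=
  C (Q1 ^ (p + 1)) * X 0 ^ p + (1 - C Q0 * X 0) ^ (p + 1)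

section PhiOfL2

variable {p : ℕ} [Fact p.Prime] {Q0 Q1 : Rp p}

lemma phi0_X_pow_p (k : Fin 2) :
    phi0 p (X k) ^ p = C (X k ^ p) + C (X k ^ p ^ 3) * X 0 ^ p := by
  rw [phi0_X, add_pow_char, mul_pow, ← map_pow, ← map_pow, ← pow_mul, ← pow_succ]

lemma phi0_L2 (hQ0 : Q0 * L2 p = L20 p) (hQ1 : Q1 * L2 p = L21 p) :
    phi0 p (L2 p) = C (L2 p) * L2Ratio p Q0 Q1 := by
  have hfrob : ((1 : Ap p) - C Q0 * X 0) ^ p = 1 - C (Q0 ^ p) * X 0 ^ p := by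
    rw [sub_pow_char, one_pow, mul_pow, map_pow]
  rw [L2, map_sub, map_mul, map_mul, map_pow, map_pow, phi0_X_pow_p, phi0_X_pow_p, phi0_X, phi0_X,
    X_pow_p_sq hQ0 hQ1, X_pow_p_sq hQ0 hQ1, X_pow_p_cube hQ0 hQ1, X_pow_p_cube hQ0 hQ1, L2Ratio,
    pow_succ (1 - C Q0 * X 0), hfrob]
  simp only [map_sub, map_mul, map_pow]
  ring

lemma L2Ratio_ne_zero : L2Ratio p Q0 Q1 ≠ 0 := by
  intro h
  have := congrArg constantCoeff h
  simp [L2Ratio, (Fact.out : p.Prime).ne_zero] at this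

lemma phi0_Q0 (hQ0 : Q0 * L2 p = L20 p) (hQ1 : Q1 * L2 p = L21 p) :
    phi0 p Q0 = C Q0 * L2Ratio p Q0 Q1 ^ (p - 1) := by
  conv_lhs => rw [Q0_eq_L2_pow hQ0]
  rw [map_pow, phi0_L2 hQ0 hQ1, mul_pow, ← map_pow, ← Q0_eq_L2_pow hQ0]

end PhiOfL2

section FirstOrder

variable {p : ℕ} [Fact p.Prime] {Q0 Q1 : Rp p}

lemma coeff_one_phiPoly_Q1_relation (hQ0 : Q0 * L2 p = L20 p) (hQ1 : Q1 * L2 p = L21 p)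
    (k : Fin 2) :
    (phiPoly p Q1).coeff 1 * phi0 p (X k) ^ p =
      phi0 p Q0 * C (X k ^ p) + (phiPoly p Q0).coeff 1 * phi0 p (X k) := by
  rw [← coeff_one_phiPoly_X]
  refine Polynomial.coeff_one_of_frobenius_relation (a := phiPoly p (X k)) (f := phiPoly p Q1)
    (g := phiPoly p Q0) ?_
  simpa only [map_pow, map_sub, map_mul] using congrArg (phiPoly p) (X_pow_p_sq hQ0 hQ1 k)

/-- The `t₁`-coefficient of `φ(Q₀)` is eliminated between the relations for `y₁` and `y₂`. -/
lemma coeff_one_phiPoly_Q1_mul_phi0_L2 (hQ0 : Q0 * L2 p = L20 p) (hQ1 : Q1 * L2 p = L21 p) :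
    (phiPoly p Q1).coeff 1 * phi0 p (L2 p) = C (L2 p) * (phi0 p Q0 * (1 - C Q0 * X 0)) := by
  have rel := coeff_one_phiPoly_Q1_relation hQ0 hQ1
  have hQ0C := congrArg (C : Rp p → Ap p) hQ0
  simp only [L2, L20, map_sub, map_mul, map_pow, phi0_X] at hQ0C rel ⊢
  linear_combination (-(C (X 1) + C (X 1) ^ p ^ 2 * X 0)) * rel 0 +
    (C (X 0) + C (X 0) ^ p ^ 2 * X 0) * rel 1 + phi0 p Q0 * X 0 * hQ0C

lemma coeff_one_phiPoly_Q1 (hQ0 : Q0 * L2 p = L20 p) (hQ1 : Q1 * L2 p = L21 p) :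
    (phiPoly p Q1).coeff 1 = C Q0 * (1 - C Q0 * X 0) * L2Ratio p Q0 Q1 ^ (p - 2) := by
  have key := coeff_one_phiPoly_Q1_mul_phi0_L2 hQ0 hQ1
  have hexp : p - 1 = p - 2 + 1 := by have := (Fact.out : p.Prime).two_le; omega
  rw [phi0_L2 hQ0 hQ1, phi0_Q0 hQ0 hQ1, hexp, pow_succ] at key
  have hC : (C (L2 p) : Ap p) ≠ 0 := (map_ne_zero_iff _ (C_injective _ _)).mpr L2_ne_zero
  refine mul_right_cancel₀ (L2Ratio_ne_zero (Q0 := Q0) (Q1 := Q1)) (mul_left_cancel₀ hC ?_)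
  linear_combination key

end FirstOrder

section Expansion

variable {p : ℕ} [Fact p.Prime] {Q0 Q1 : Rp p}

lemma coeff_one_phiPoly_Q1_eq_sum (hQ0 : Q0 * L2 p = L20 p) (hQ1 : Q1 * L2 p = L21 p) :
    (phiPoly p Q1).coeff 1 = ∑ i ∈ range p, C ((p - 2).choose i * Q0 * Q1 ^ ((p + 1) * i)) *
      X 0 ^ (p * i) * (1 - C Q0 * X 0) ^ ((p + 1) * (p - 2 - i) + 1) := by
  rw [coeff_one_phiPoly_Q1 hQ0 hQ1, L2Ratio, add_pow, mul_sum]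
  have hp := (Fact.out : p.Prime).pos
  rw [← sum_subset (range_subset_range.2 (show p - 2 + 1 ≤ p by omega)) fun i _ hi => ?vanish]
  · refine sum_congr rfl fun i _ => ?_
    simp only [map_mul, map_pow, map_natCast]
    generalize (1 : Ap p) - C Q0 * X 0 = y
    ring
  case vanish =>
    rw [mem_range, not_lt] at hi
    simp [Nat.choose_eq_zero_of_lt (show p - 2 < i by omega)]

end Expansion

def stCoeff (p i m : ℕ) : ZMod p :=
  (p - 2).choose i * (-1) ^ m * ((p + 1) * (p - 2 - i) + 1).choose m

lemma St_one_Q1_eq_sum {p : ℕ} [Fact p.Prime] {Q0 Q1 : Rp p} (hQ0 : Q0 * L2 p = L20 p)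
    (hQ1 : Q1 * L2 p = L21 p) (j : ℕ) :
    St p 1 j Q1 = ∑ i ∈ range p, if p * i ≤ j then
      C (stCoeff p i (j - p * i)) * Q0 ^ (j - p * i + 1) * Q1 ^ ((p + 1) * i) else 0 := by
  rw [St_eq_coeff_phiPoly, coeff_one_phiPoly_Q1_eq_sum hQ0 hQ1, coeff_sum]
  refine sum_congr rfl fun i _ => ?_
  rw [coeff_C_mul_X_pow_mul_one_sub_C_mul_X_pow]
  split_ifs
  · simp only [stCoeff, map_mul, map_pow, map_neg, map_one, map_natCast, neg_pow Q0]
    ring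
  · rfl

lemma stCoeff_eq_zero {p i m : ℕ} (hp : 2 ≤ p) (hi : i < p) (hm : p ^ 2 ≤ p * i + m) :
    stCoeff p i m = 0 := by
  obtain ⟨d, rfl⟩ : ∃ d, p = i + 1 + d := ⟨p - i - 1, by omega⟩
  have hlt : (i + 1 + d + 1) * (i + 1 + d - 2 - i) + 1 < m := by
    rcases d with _ | e
    · rw [show i + 1 + 0 - 2 - i = 0 by omega]
      nlinarith
    · rw [show i + 1 + (e + 1) - 2 - i = e by omega]
      nlinarith
  simp [stCoeff, Nat.choose_eq_zero_of_lt hlt]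

lemma stCoeff_eq {p i k r : ℕ} [Fact p.Prime] (hodd : Odd p) (hik : i ≤ k) (hk : k < p)
    (hr : r < p) :
    stCoeff p i ((k - i) * p + r) = (k + 1) * (-1) ^ i * k.choose i * (r + i).choose i := by
  have hp := (Fact.out : p.Prime).two_le
  rcases (show i = p - 1 ∨ i + 2 ≤ p by omega) with rfl | hi
  · have hk1 : ((p - 1 + 1 : ℕ) : ZMod p) = 0 := by
      rw [Nat.sub_add_cancel (by omega), ZMod.natCast_self]
    rw [stCoeff, Nat.choose_eq_zero_of_lt (by omega), show k = p - 1 by omega]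
    push_cast at hk1 ⊢
    rw [hk1]
    simp
  obtain ⟨d, hd⟩ : ∃ d, p - 2 - i = d := ⟨_, rfl⟩
  have hlucas : (((p + 1) * d + 1).choose ((k - i) * p + r) : ZMod p) =
      (d + 1).choose r * d.choose (k - i) := by
    rw [← ZMod.choose_add_mul_choose (by omega) hr]
    congr 2 <;> ring
  have h1 : ((p - 2).choose i : ZMod p) = (-1) ^ i * (1 + i).choose i := by
    rw [show p - 2 = p - 1 - 1 by omega, ZMod.choose_sub_one_sub (by omega) (by omega), add_comm]
  have h2 : ((d + 1).choose r : ZMod p) = (-1) ^ r * (i + r).choose r := by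
    rw [show d + 1 = p - 1 - i by omega, ZMod.choose_sub_one_sub (by omega) hr]
  have h3 : (d.choose (k - i) : ZMod p) = (-1) ^ (k - i) * (i + 1 + (k - i)).choose (k - i) := by
    rw [show d = p - 1 - (i + 1) by omega, ZMod.choose_sub_one_sub (by omega) (by omega)]
  have hnat : (1 + i).choose i * (i + 1 + (k - i)).choose (k - i) * (i + r).choose r =
      (k + 1) * k.choose i * (r + i).choose i := by
    rw [← Nat.choose_symm_add, Nat.choose_one_right, show i + 1 + (k - i) = k + 1 by omega,
      ← Nat.choose_symm_of_eq_add (show k + 1 = (i + 1) + (k - i) by omega),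
      ← Nat.choose_symm_add (a := i), add_comm i r, add_comm 1 i, mul_comm (i + 1),
      ← Nat.add_one_mul_choose_eq]
  have hsign : (-1 : ZMod p) ^ ((k - i) * p + r) = (-1) ^ (k - i) * (-1) ^ r := by
    rw [pow_add, mul_comm (k - i) p, pow_mul, hodd.neg_one_pow]
  have hcast := congrArg (Nat.cast : ℕ → ZMod p) hnat
  push_cast at hcast
  have hsq : ((-1 : ZMod p) ^ (k - i + r)) ^ 2 = 1 := by
    rw [← pow_mul, mul_comm, pow_mul, neg_one_sq, one_pow]
  rw [stCoeff, hd, hlucas, h1, h2, h3, hsign]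
  linear_combination (-1 : ZMod p) ^ i * ((1 + i).choose i : ZMod p) *
    ((i + 1 + (k - i)).choose (k - i) : ZMod p) * ((i + r).choose r : ZMod p) * hsq +
    (-1 : ZMod p) ^ i * hcast

lemma filter_mul_le_mul_add_eq_range {p k r : ℕ} (hk : k < p) (hr : r < p) :
    (range p).filter (fun i => p * i ≤ k * p + r) = range (k + 1) := by
  ext i
  simp only [mem_filter, mem_range]
  constructor
  · rintro ⟨-, h⟩
    by_contra! h'
    nlinarith
  · intro h
    exact ⟨by omega, by nlinarith⟩

theorem st_1j_Q21 (p : ℕ) (hp : p.Prime) (hodd : Odd p)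
    (Q0 Q1 : MvPolynomial (Fin 2) (ZMod p))
    (hQ0 : Q0 * L2 p = L20 p) (hQ1 : Q1 * L2 p = L21 p)
    (j : ℕ) :
    (∀ k r : ℕ, k < p → r < p → j = k * p + r →
      St p 1 j Q1 = C ((k : ZMod p) + 1) * Q0 ^ (r + 1) *
        ∑ i ∈ Finset.range (k + 1),
          (-1 : MvPolynomial (Fin 2) (ZMod p)) ^ i *
            C ((k.choose i : ZMod p)) * C (((r + i).choose i : ZMod p)) *
            Q0 ^ ((k - i) * p) * Q1 ^ (i * (p + 1))) ∧
    (p ^ 2 ≤ j → St p 1 j Q1 = 0) := by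
  have := Fact.mk hp
  rw [St_one_Q1_eq_sum hQ0 hQ1]
  refine ⟨fun k r hk hr hj => ?_, fun hj => sum_eq_zero fun i hi => ?_⟩
  · subst hj
    rw [← sum_filter, filter_mul_le_mul_add_eq_range hk hr, mul_sum]
    refine sum_congr rfl fun i hi => ?_
    have hik : i ≤ k := Nat.lt_succ_iff.1 (mem_range.1 hi)
    have hm : k * p + r - p * i = (k - i) * p + r := by
      have := Nat.mul_le_mul_right p hik
      rw [Nat.sub_mul, mul_comm p i]
      omega
    rw [hm, stCoeff_eq hodd hik hk hr]
    simp only [map_mul, map_add, map_pow, map_neg, map_one, map_natCast]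
    ring
  · split_ifs with h
    · rw [stCoeff_eq_zero hp.two_le (mem_range.1 hi) (by omega), map_zero, zero_mul, zero_mul]
    · rfl
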